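/- Under the same hypotheses, if λ = 1 then φ(u) = φ(ε) for almost all pairs (ε,u) (with respect to the measure w(ε)K̄0(ε,u) dε du), hence φ is constant almost everywhere; thus the eigenvalue 1 of K0 = K̄0/Γ0 has multiplicity one, with constant eigenfunction. -/
import Mathlib


open MeasureTheory Real

noncomputable def f0 (x : ℝ) : ℝ := 1 / (Real.exp x + 1)
noncomputable def n0 (y : ℝ) : ℝ := 1 / (Real.exp y - 1)
noncomputable def w (x : ℝ) : ℝ := f0 x * (1 - f0 x)
noncomputable def k0 (x y : ℝ) : ℝ := (n0 y + f0 (y + x)) * y ^ 2 * Real.sign y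
noncomputable def K0bar (e u : ℝ) : ℝ := (n0 (u - e) + f0 u) * (u - e) ^ 2 * Real.sign (u - e)
noncomputable def Gamma0 (e : ℝ) : ℝ := ∫ u, K0bar e u
noncomputable def gamma0 (x : ℝ) : ℝ := ∫ y, k0 x y

lemma f0_pos (x : ℝ) : 0 < f0 x := by
  unfold f0; positivity

lemma f0_lt_one (x : ℝ) : f0 x < 1 := by
  unfold f0
  rw [div_lt_one (by positivity)]
  linarith [Real.exp_pos x]

lemma w_pos (x : ℝ) : 0 < w x := by
  unfold w
  have := f0_pos x; have := f0_lt_one x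
  nlinarith

lemma K0bar_pos {e u : ℝ} (h : u ≠ e) : 0 < K0bar e u := by
  unfold K0bar n0 f0
  rcases lt_or_gt_of_ne (sub_ne_zero.mpr h) with hlt | hgt
  · rw [Real.sign_of_neg hlt]
    have h1 : Real.exp (u - e) < 1 := by
      rw [Real.exp_lt_one_iff]; linarith
    have h2 : 0 < Real.exp (u - e) := Real.exp_pos _
    have hden : Real.exp (u - e) - 1 < 0 := by linarith
    have h3 : 1 / (Real.exp (u - e) - 1) < -1 := by
      rw [div_lt_iff_of_neg hden]; linarith
    have h4 : 1 / (Real.exp u + 1) < 1 := f0_lt_one u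
    have h5 : (0:ℝ) < (u - e)^2 := pow_two_pos_of_ne_zero (sub_ne_zero.mpr h)
    nlinarith
  · rw [Real.sign_of_pos hgt]
    have h1 : 1 < Real.exp (u - e) := by
      rw [← Real.exp_zero]; exact Real.exp_lt_exp.mpr (by linarith)
    have h3 : 0 < 1 / (Real.exp (u - e) - 1) := one_div_pos.mpr (by linarith)
    have h4 : 0 < 1 / (Real.exp u + 1) := f0_pos u
    have h5 : (0:ℝ) < (u - e)^2 := pow_two_pos_of_ne_zero (sub_ne_zero.mpr h)
    nlinarith

lemma K0bar_nonneg (e u : ℝ) : 0 ≤ K0bar e u := by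
  rcases eq_or_ne u e with h | h
  · subst h; unfold K0bar; simp
  · exact (K0bar_pos h).le

lemma detailed_balance (e u : ℝ) : w e * K0bar e u = w u * K0bar u e := by
  rcases eq_or_ne u e with h | h
  · subst h; unfold K0bar; simp
  · have key : w e * (n0 (u - e) + f0 u) = - (w u * (n0 (e - u) + f0 e)) := by
      unfold w n0 f0
      have ha : Real.exp e ≠ 0 := (Real.exp_pos e).ne'
      have hb : Real.exp u ≠ 0 := (Real.exp_pos u).ne'
      have ha1 : Real.exp e + 1 ≠ 0 := by positivity
      have hb1 : Real.exp u + 1 ≠ 0 := by positivity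
      have hne : Real.exp u ≠ Real.exp e := fun hc => h (Real.exp_injective hc)
      have hd : u - e ≠ 0 := sub_ne_zero.mpr h
      have hd' : e - u ≠ 0 := fun hc => h (by linarith [sub_eq_zero.mp hc])
      have h1 : Real.exp (u - e) - 1 ≠ 0 := sub_ne_zero.mpr
        (fun hc => hd (Real.exp_injective (by rw [hc, Real.exp_zero])))
      have h2 : Real.exp (e - u) - 1 ≠ 0 := sub_ne_zero.mpr
        (fun hc => hd' (Real.exp_injective (by rw [hc, Real.exp_zero])))
      have h3 : Real.exp u - Real.exp e ≠ 0 := sub_ne_zero.mpr hne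
      have h3' : Real.exp e - Real.exp u ≠ 0 := sub_ne_zero.mpr (fun hc => hne hc.symm)
      simp only [Real.exp_sub] at h1 h2 ⊢
      field_simp
      ring
    unfold K0bar
    rcases lt_or_gt_of_ne (sub_ne_zero.mpr h) with hlt | hgt
    · rw [Real.sign_of_neg hlt, Real.sign_of_pos (by linarith : (0:ℝ) < e - u)]
      nlinarith [key]
    · rw [Real.sign_of_pos hgt, Real.sign_of_neg (by linarith : e - u < 0)]
      nlinarith [key]

lemma cont_f0 : Continuous f0 := by
  unfold f0
  exact continuous_const.div (by continuity) (fun x => by positivity)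

lemma meas_n0 : Measurable n0 := by
  unfold n0
  simp only [one_div]
  exact (Real.measurable_exp.sub measurable_const).inv

lemma meas_sign : Measurable Real.sign := by
  have : Real.sign = fun r : ℝ => if r < 0 then (-1:ℝ) else if 0 < r then 1 else 0 := by
    funext r; rfl
  rw [this]
  refine Measurable.ite (measurableSet_lt measurable_id measurable_const) measurable_const
    (Measurable.ite (measurableSet_lt measurable_const measurable_id) measurable_const
      measurable_const)

lemma meas_w : Measurable w := by
  unfold w
  exact (cont_f0.measurable).mul ((measurable_const.sub cont_f0.measurable))

lemma meas_K : Measurable (fun p : ℝ × ℝ => K0bar p.1 p.2) := by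
  unfold K0bar
  have hsub : Measurable (fun p : ℝ × ℝ => p.2 - p.1) := measurable_snd.sub measurable_fst
  exact (((meas_n0.comp hsub).add (cont_f0.measurable.comp measurable_snd)).mul
    (hsub.pow_const 2)).mul (meas_sign.comp hsub)

lemma Gamma0_pos (e : ℝ) (hker : Integrable (fun u => K0bar e u)) : 0 < Gamma0 e := by
  unfold Gamma0
  rw [integral_pos_iff_support_of_nonneg (fun u => K0bar_nonneg e u) hker]
  have hsub : Set.Ioi e ⊆ Function.support (K0bar e) := by
    intro u hu
    exact (K0bar_pos (ne_of_gt hu)).ne'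
  calc (0:ENNReal) < volume (Set.Ioi e) := by rw [Real.volume_Ioi]; exact ENNReal.zero_lt_top
    _ ≤ volume (Function.support (K0bar e)) := measure_mono hsub

lemma abs_mul_le_half (a b : ℝ) : |a * b| ≤ (a ^ 2 + b ^ 2) / 2 := by
  rw [abs_mul]
  nlinarith [sq_nonneg (|a| - |b|), sq_abs a, sq_abs b, abs_nonneg a, abs_nonneg b]

theorem eigenvalue_one_constant (φ : ℝ → ℝ) (lam : ℝ)
    (hmeas : Measurable φ)
    (hL2 : Integrable (fun e => w e * Gamma0 e * φ e ^ 2))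
    (hker : ∀ e, Integrable (fun u => K0bar e u))
    (heig : ∀ e, lam * φ e = ∫ u, (K0bar e u / Gamma0 e) * φ u)
    (hlam : lam = 1) :
    (∀ᵐ p ∂((volume : Measure (ℝ × ℝ)).withDensity
        fun p => ENNReal.ofReal (w p.1 * K0bar p.1 p.2)), φ p.2 = φ p.1) ∧
    (∃ c : ℝ, ∀ᵐ e ∂((volume : Measure ℝ).withDensity
        fun e => ENNReal.ofReal (w e * Gamma0 e)), φ e = c) := by
  subst hlam
  set μ : Measure ℝ := volume with hμ
  -- eigen identity
  have heig' : ∀ e, ∫ u, K0bar e u * φ u = Gamma0 e * φ e := by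
    intro e
    have h0 := heig e
    rw [one_mul] at h0
    have hrw : ∫ u, (K0bar e u / Gamma0 e) * φ u
        = (Gamma0 e)⁻¹ * ∫ u, K0bar e u * φ u := by
      rw [← integral_const_mul]
      congr 1; funext u; field_simp
    rw [hrw] at h0
    have hΓ : Gamma0 e ≠ 0 := (Gamma0_pos e (hker e)).ne'
    field_simp at h0
    linarith
  -- the functions on the product space
  set g1 : ℝ × ℝ → ℝ := fun p => w p.1 * K0bar p.1 p.2 * φ p.2 ^ 2 with hg1def
  set g2 : ℝ × ℝ → ℝ := fun p => w p.1 * K0bar p.1 p.2 * φ p.1 ^ 2 with hg2def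
  set g3 : ℝ × ℝ → ℝ := fun p => w p.1 * K0bar p.1 p.2 * (φ p.2 * φ p.1) with hg3def
  set F : ℝ × ℝ → ℝ := fun p => w p.1 * K0bar p.1 p.2 * (φ p.2 - φ p.1) ^ 2 with hFdef
  have hWK : Measurable (fun p : ℝ × ℝ => w p.1 * K0bar p.1 p.2) :=
    (meas_w.comp measurable_fst).mul meas_K
  have hg1m : Measurable g1 := hWK.mul ((hmeas.comp measurable_snd).pow_const 2)
  have hg2m : Measurable g2 := hWK.mul ((hmeas.comp measurable_fst).pow_const 2)
  have hg3m : Measurable g3 :=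
    hWK.mul ((hmeas.comp measurable_snd).mul (hmeas.comp measurable_fst))
  have hFm : Measurable F :=
    hWK.mul (((hmeas.comp measurable_snd).sub (hmeas.comp measurable_fst)).pow_const 2)
  have hvol : (volume : Measure (ℝ × ℝ)) = μ.prod μ := Measure.volume_eq_prod ℝ ℝ
  -- integrability of g2
  have hg2i : Integrable g2 (μ.prod μ) := by
    rw [integrable_prod_iff hg2m.aestronglyMeasurable]
    constructor
    · refine Filter.Eventually.of_forall (fun e => ?_)
      have := ((hker e).const_mul (w e * φ e ^ 2))
      exact this.congr (Filter.Eventually.of_forall (fun u => by simp [hg2def]; ring))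
    · have hEq : ∀ e, (∫ u, ‖g2 (e, u)‖ ∂μ) = w e * Gamma0 e * φ e ^ 2 := by
        intro e
        have h1 : ∀ u, ‖g2 (e, u)‖ = (w e * φ e ^ 2) * K0bar e u := by
          intro u
          rw [Real.norm_eq_abs, abs_of_nonneg]
          · simp only [hg2def]; ring
          · have := (w_pos e).le
            have := K0bar_nonneg e u
            positivity
        simp_rw [h1]
        rw [integral_const_mul]
        rw [show (∫ u, K0bar e u ∂μ) = Gamma0 e from rfl]
        ring
      exact hL2.congr (Filter.Eventually.of_forall (fun e => (hEq e).symm))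
  -- g1 = g2 ∘ swap
  have hswap : ∀ p : ℝ × ℝ, g1 p = g2 p.swap := by
    intro p
    simp only [hg1def, hg2def, Prod.snd_swap, Prod.fst_swap]
    rw [detailed_balance p.1 p.2]
  have hg1i : Integrable g1 (μ.prod μ) := by
    have := hg2i.swap
    exact this.congr (Filter.Eventually.of_forall (fun p => (hswap p).symm))
  have hint1 : ∫ p, g1 p ∂(μ.prod μ) = ∫ p, g2 p ∂(μ.prod μ) := by
    rw [show (fun p : ℝ × ℝ => g1 p) = fun p : ℝ × ℝ => g2 p.swap from funext hswap]
    exact integral_prod_swap g2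
  -- value of ∫ g2
  have hI2 : ∫ p, g2 p ∂(μ.prod μ) = ∫ e, w e * Gamma0 e * φ e ^ 2 ∂μ := by
    rw [integral_prod _ hg2i]
    congr 1
    funext e
    have h1 : ∀ u, g2 (e, u) = (w e * φ e ^ 2) * K0bar e u := by
      intro u; simp only [hg2def]; ring
    simp_rw [h1]
    rw [integral_const_mul]
    rw [show (∫ u, K0bar e u ∂μ) = Gamma0 e from rfl]
    ring
  -- integrability of g3
  have hg3i : Integrable g3 (μ.prod μ) := by
    refine Integrable.mono' ((hg1i.add hg2i).const_mul (1/2)) hg3m.aestronglyMeasurable ?_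
    refine Filter.Eventually.of_forall (fun p => ?_)
    simp only [hg3def, hg1def, hg2def, Real.norm_eq_abs, Pi.add_apply]
    rw [abs_mul, abs_of_nonneg (by
      have := (w_pos p.1).le; have := K0bar_nonneg p.1 p.2; positivity :
        (0:ℝ) ≤ w p.1 * K0bar p.1 p.2)]
    have h2 := abs_mul_le_half (φ p.2) (φ p.1)
    have h3 : (0:ℝ) ≤ w p.1 * K0bar p.1 p.2 :=
      mul_nonneg (w_pos p.1).le (K0bar_nonneg p.1 p.2)
    nlinarith [abs_nonneg (φ p.2 * φ p.1)]
  -- value of ∫ g3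
  have hI3 : ∫ p, g3 p ∂(μ.prod μ) = ∫ e, w e * Gamma0 e * φ e ^ 2 ∂μ := by
    rw [integral_prod _ hg3i]
    congr 1
    funext e
    have h1 : ∀ u, g3 (e, u) = (w e * φ e) * (K0bar e u * φ u) := by
      intro u; simp only [hg3def]; ring
    simp_rw [h1]
    rw [integral_const_mul, heig' e]
    ring
  -- F = g1 + g2 - 2 g3, integrable, integral zero
  have hFeq : ∀ p, F p = g1 p + g2 p - 2 * g3 p := by
    intro p; simp only [hFdef, hg1def, hg2def, hg3def]; ring
  have hFi : Integrable F (μ.prod μ) := by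
    have := (hg1i.add hg2i).sub (hg3i.const_mul 2)
    exact this.congr (Filter.Eventually.of_forall (fun p => by
      simp only [Pi.add_apply, Pi.sub_apply]
      rw [hFeq p]))
  have hFint0 : ∫ p, F p ∂(μ.prod μ) = 0 := by
    rw [show (fun p : ℝ × ℝ => F p) = fun p => g1 p + g2 p - 2 * g3 p from funext hFeq]
    have hadd : Integrable (fun p : ℝ × ℝ => g1 p + g2 p) (μ.prod μ) := hg1i.add hg2i
    have hmul : Integrable (fun p : ℝ × ℝ => 2 * g3 p) (μ.prod μ) := hg3i.const_mul 2
    rw [integral_sub hadd hmul, integral_add hg1i hg2i,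
      integral_const_mul, hint1, hI2, hI3]
    ring
  have hFnn : ∀ p, 0 ≤ F p := by
    intro p
    exact mul_nonneg (mul_nonneg (w_pos p.1).le (K0bar_nonneg p.1 p.2)) (sq_nonneg _)
  have hF0 : F =ᵐ[μ.prod μ] 0 :=
    (integral_eq_zero_iff_of_nonneg hFnn hFi).mp hFint0
  -- Part 1
  have part1 : ∀ᵐ p ∂((volume : Measure (ℝ × ℝ)).withDensity
      fun p => ENNReal.ofReal (w p.1 * K0bar p.1 p.2)), φ p.2 = φ p.1 := by
    have hD : Measurable (fun p : ℝ × ℝ => ENNReal.ofReal (w p.1 * K0bar p.1 p.2)) :=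
      ENNReal.measurable_ofReal.comp hWK
    rw [ae_withDensity_iff hD]
    rw [hvol]
    filter_upwards [hF0] with p hp hne
    have hpos : 0 < w p.1 * K0bar p.1 p.2 := by
      by_contra hc
      exact hne (ENNReal.ofReal_eq_zero.mpr (le_of_not_gt hc))
    have hp0 : F p = 0 := hp
    have : (φ p.2 - φ p.1) ^ 2 = 0 := by
      have := hFdef
      by_contra hc
      have h4 : 0 < (φ p.2 - φ p.1) ^ 2 := lt_of_le_of_ne (sq_nonneg _) (Ne.symm hc)
      have : 0 < F p := mul_pos hpos h4
      linarith [hp0]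
    have := pow_eq_zero_iff (n := 2) (by norm_num) |>.mp this
    linarith [sub_eq_zero.mp this]
  refine ⟨part1, ?_⟩
  -- Part 2
  have h2 : ∀ᵐ e ∂μ, ∀ᵐ u ∂μ, F (e, u) = 0 := by
    have := hF0
    exact Measure.ae_ae_of_ae_prod this
  have h2' : ∀ᵐ e ∂μ, ∀ᵐ u ∂μ, φ u = φ e := by
    filter_upwards [h2] with e he
    have hne : ∀ᵐ u ∂μ, u ≠ e := by
      rw [ae_iff]
      have : {u : ℝ | ¬ u ≠ e} = {e} := by ext u; simp
      rw [this]
      exact measure_singleton e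
    filter_upwards [he, hne] with u hu hune
    have hpos : 0 < w e * K0bar e u := mul_pos (w_pos e) (K0bar_pos hune)
    have hsq : (φ u - φ e) ^ 2 = 0 := by
      by_contra hc
      have h4 : 0 < (φ u - φ e) ^ 2 := lt_of_le_of_ne (sq_nonneg _) (Ne.symm hc)
      have : 0 < F (e, u) := mul_pos hpos h4
      linarith [hu]
    have := pow_eq_zero_iff (n := 2) (by norm_num) |>.mp hsq
    linarith [sub_eq_zero.mp this]
  obtain ⟨e0, he0⟩ := h2'.exists
  refine ⟨φ e0, ?_⟩
  have hconst : ∀ᵐ e ∂μ, φ e = φ e0 := by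
    filter_upwards [h2'] with e he
    obtain ⟨u, hu1, hu2⟩ := (he.and he0).exists
    rw [← hu1, hu2]
  exact hconst.filter_mono (withDensity_absolutelyContinuous μ _).ae_le
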